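/- arXiv:2006.03378 — 3 statements merged into one kernel-verified Lean document; each statement's English description precedes it below -/
import Mathlib

section
/- Fix m ∈ ℝ and let D_{m,+} be the set of probability measures supported on some interval [m,M] with M > m. For every ν ∈ D_{m,+} with mean μ and every μ⋆ > μ, the infimum K_inf(ν, μ⋆, D_{m,+}) = inf{ KL(ν,ν') : ν' ∈ D_{m,+}, E(ν') > μ⋆ } equals 0. -/
open MeasureTheory

open Classical

/-- Kullback–Leibler divergence: `∫ ln(dν/dν') dν` when `ν ≪ ν'`, and `+∞` otherwise. -/
noncomputable def KLdiv (ν ν' : Measure ℝ) : EReal :=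
  if ν ≪ ν' then ((∫ x, Real.log ((ν.rnDeriv ν') x).toReal ∂ν : ℝ) : EReal) else ⊤

/-- The model `D_{m,+}` of probability measures supported on some `[m, M]` with `M > m`. -/
def Dmp (m : ℝ) : Set (Measure ℝ) :=
  {ν | IsProbabilityMeasure ν ∧ ∃ M, m < M ∧ ν (Set.Icc m M)ᶜ = 0}

/-!
`D_{m,+}` puts no upper bound on the support, so mixing `ν` with a far-away atom,
`w ν + (1 - w) δ_c`, lifts the mean above any `μ⋆` once `c` is large, while `ν` is mutually
singular to `δ_c` and the divergence from `ν` is exactly `-log w`, whatever `c` is.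
Taking `w = e^{-δ}` every `δ > 0` is attained, and Gibbs' inequality gives the lower bound `0`.
-/

open Real NNReal InformationTheory

lemma KLdiv_nonneg (ν ν' : Measure ℝ) [IsProbabilityMeasure ν] [IsProbabilityMeasure ν'] :
    0 ≤ KLdiv ν ν' := by
  rw [KLdiv]
  split_ifs with hac
  · by_cases hint : Integrable (llr ν ν') ν
    · have := integral_llr_add_sub_measure_univ_nonneg hac hint
      simp only [probReal_univ, add_sub_cancel_right] at this
      exact EReal.coe_nonneg.2 this
    · exact EReal.coe_nonneg.2 (integral_undef hint).ge
  · exact le_top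

lemma KLdiv_smul_add_of_mutuallySingular {ν η : Measure ℝ} [IsProbabilityMeasure ν]
    [SigmaFinite η] (hνη : ν ⟂ₘ η) {w : ℝ≥0} (hw : w ≠ 0) :
    KLdiv ν (w • ν + η) = ((-log w : ℝ) : EReal) := by
  have hac : ν ≪ w • ν := Measure.absolutelyContinuous_smul (by exact_mod_cast hw)
  have hadd : llr ν (w • ν + η) =ᵐ[ν] llr ν (w • ν) := by
    filter_upwards [hac.ae_le (Measure.rnDeriv_add_right_of_mutuallySingular (μ := ν)
      (hνη.smul_nnreal w))] with x hx
    simp only [llr_def, hx]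
  have hllr : llr ν (w • ν + η) =ᵐ[ν] fun _ ↦ -log w := by
    filter_upwards [hadd, llr_smul_nnreal_right Measure.AbsolutelyContinuous.rfl w hw,
      llr_self ν] with x h₁ h₂ h₃
    rw [h₁, h₂, h₃, Pi.zero_apply, zero_sub]
  rw [KLdiv, if_pos (hac.add_right η)]
  change ((∫ x, llr ν (w • ν + η) x ∂ν : ℝ) : EReal) = _
  rw [integral_congr_ae hllr, integral_const, probReal_univ, one_smul]

lemma integrable_id_of_mem_Dmp {m : ℝ} {ν : Measure ℝ} (hν : ν ∈ Dmp m) :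
    Integrable (fun x ↦ x) ν := by
  obtain ⟨hprob, M, -, hsupp⟩ := hν
  refine Integrable.of_bound measurable_id.aestronglyMeasurable (max |m| |M|) ?_
  filter_upwards [mem_ae_iff.2 hsupp] with x hx
  exact abs_le_max_abs_abs hx.1 hx.2

-- The paper's `ν'_ε` is `mixDirac ν (1 - ε) (μ + 2Δ/ε)`.
noncomputable def mixDirac (ν : Measure ℝ) (w : ℝ≥0) (c : ℝ) : Measure ℝ :=
  w • ν + (1 - w) • Measure.dirac c

section mixDirac

variable {ν : Measure ℝ} {w : ℝ≥0} {c : ℝ}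

lemma isProbabilityMeasure_mixDirac [IsProbabilityMeasure ν] (hw : w ≤ 1) :
    IsProbabilityMeasure (mixDirac ν w c) := by
  constructor
  rw [mixDirac, Measure.add_apply, Measure.smul_apply, Measure.smul_apply, measure_univ,
    measure_univ, ← add_smul, add_tsub_cancel_of_le hw, one_smul]

lemma integral_id_mixDirac (hν : Integrable (fun x ↦ x) ν) (hw : w ≤ 1) :
    ∫ x, x ∂(mixDirac ν w c) = w * ∫ x, x ∂ν + (1 - w) * c := by
  rw [mixDirac, integral_add_measure hν.smul_measure_nnreal
    (integrable_dirac enorm_lt_top).smul_measure_nnreal, integral_smul_nnreal_measure,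
    integral_smul_nnreal_measure, integral_dirac, NNReal.smul_def, NNReal.smul_def,
    NNReal.coe_sub hw, NNReal.coe_one, smul_eq_mul, smul_eq_mul]

lemma mixDirac_mem_Dmp {m : ℝ} (hν : ν ∈ Dmp m) (hw : w ≤ 1) (hc : m ≤ c) :
    mixDirac ν w c ∈ Dmp m := by
  obtain ⟨hprob, M, hmM, hsupp⟩ := hν
  refine ⟨isProbabilityMeasure_mixDirac hw, max M c, hmM.trans_le (le_max_left _ _), ?_⟩
  have hνc : ν (Set.Icc m (max M c))ᶜ = 0 :=
    measure_mono_null (Set.compl_subset_compl.2 (Set.Icc_subset_Icc_right (le_max_left _ _)))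
      hsupp
  have hδc : Measure.dirac c (Set.Icc m (max M c))ᶜ = 0 := by
    simp [hc]
  simp [mixDirac, hνc, hδc]

lemma KLdiv_mixDirac [IsProbabilityMeasure ν] (hw : w ≠ 0) (hc : ν {c} = 0) :
    KLdiv ν (mixDirac ν w c) = ((-log w : ℝ) : EReal) := by
  have hνδ : ν ⟂ₘ Measure.dirac c := ⟨{c}, measurableSet_singleton c, hc, by simp⟩
  exact KLdiv_smul_add_of_mutuallySingular (hνδ.symm.smul_nnreal _).symm hw

end mixDirac

lemma exists_mem_Dmp_integral_gt_KLdiv_eq {m : ℝ} {ν : Measure ℝ} (hν : ν ∈ Dmp m) (μstar : ℝ)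
    {δ : ℝ} (hδ : 0 < δ) :
    ∃ ν' ∈ Dmp m, μstar < ∫ x, x ∂ν' ∧ KLdiv ν ν' = δ := by
  obtain ⟨hprob, M, hmM, hsupp⟩ := id hν
  set μ := ∫ x, x ∂ν
  let w : ℝ≥0 := ⟨exp (-δ), (exp_pos _).le⟩
  have hw : (w : ℝ) = exp (-δ) := rfl
  have hw0 : w ≠ 0 := by
    rw [← NNReal.coe_ne_zero, hw]
    exact (exp_pos _).ne'
  have hw1 : w < 1 := by
    rw [← NNReal.coe_lt_one, hw]
    exact exp_lt_one_iff.2 (neg_neg_of_pos hδ)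
  have h1w : 0 < 1 - (w : ℝ) := sub_pos.2 hw1
  set c := max M ((μstar - w * μ) / (1 - w)) + 1
  have hMc : M < c := by linarith [le_max_left M ((μstar - w * μ) / (1 - w))]
  have hmean : μstar < w * μ + (1 - w) * c := by
    have := (div_lt_iff₀' h1w).1
      ((le_max_right M ((μstar - w * μ) / (1 - w))).trans_lt (lt_add_one _))
    linarith
  have hc : ν {c} = 0 := by
    refine measure_mono_null (Set.singleton_subset_iff.2 ?_) hsupp
    exact fun hcM ↦ hMc.not_ge hcM.2
  refine ⟨mixDirac ν w c, mixDirac_mem_Dmp hν hw1.le (by linarith), ?_, ?_⟩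
  · rwa [integral_id_mixDirac (integrable_id_of_mem_Dmp hν) hw1.le]
  · rw [KLdiv_mixDirac hw0 hc, hw, log_exp, neg_neg]

theorem Kinf_eq_zero_general (m μstar : ℝ) (ν : Measure ℝ)
    (hν : ν ∈ Dmp m) :
    sInf {d : EReal | ∃ ν' ∈ Dmp m, μstar < (∫ x, x ∂ν') ∧ d = KLdiv ν ν'} = 0 := by
  refine le_antisymm (EReal.le_of_forall_lt_iff_le.1 fun δ hδ ↦ sInf_le ?_) (le_sInf ?_)
  · obtain ⟨ν', hν', hmean, hKL⟩ :=
      exists_mem_Dmp_integral_gt_KLdiv_eq hν μstar (EReal.coe_pos.1 hδ)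
    exact ⟨ν', hν', hmean, hKL.symm⟩
  · rintro _ ⟨ν', hν', -, rfl⟩
    have := hν.1
    have := hν'.1
    exact KLdiv_nonneg ν ν'

theorem Kinf_eq_zero (m μ μstar : ℝ) (ν : Measure ℝ)
    (hν : ν ∈ Dmp m) (hμ : μ = ∫ x, x ∂ν) (hμstar : μ < μstar) :
    sInf {d : EReal | ∃ ν' ∈ Dmp m, μstar < (∫ x, x ∂ν') ∧ d = KLdiv ν ν'} = 0 :=
  Kinf_eq_zero_general m μstar ν hν
end

section
/- Fix M ∈ ℝ and m ≤ M. Denote by D_{m,M} the probability measures supported on [m,M] and by D_{-∞,M} the probability measures supported on (-∞,M] with finite first moment. For every ν ∈ D_{m,M} and every μ > E(ν), the quantities K_inf(ν, μ, D_{m,M}) and K_inf(ν, μ, D_{-∞,M}) are equal, where K_inf(ν, x, D) = inf{ KL(ν,ν') : ν' ∈ D, E(ν') > x }. -/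
open MeasureTheory

open Classical

/-- The model `D_{m,M}` of probability measures supported on `[m, M]`. -/
def DmM (m M : ℝ) : Set (Measure ℝ) :=
  {ν | IsProbabilityMeasure ν ∧ ν (Set.Icc m M)ᶜ = 0}

/-- The model `D_{-∞,M}` of probability measures supported on `(-∞, M]`
with a finite first moment. -/
def DinfM (M : ℝ) : Set (Measure ℝ) :=
  {ν | IsProbabilityMeasure ν ∧ ν (Set.Iic M)ᶜ = 0 ∧ Integrable (fun x : ℝ => x) ν}

/-! Pushing a competitor `ν'` forward under `x ↦ max x m` gives a measure `ν''` in `D_{m,M}` with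
no smaller mean. Since `ν` lives on `[m, ∞)`, the pushforward agrees with `ν'` on `(m, ∞)` and only gains
mass at `m`, so `dν/dν''` is dominated by `dν/dν'` and equals it off the single point `m`; hence
`KL(ν, ν'') ≤ KL(ν, ν')`. The other inequality is the inclusion `D_{m,M} ⊆ D_{-∞,M}`. -/

open Set Filter
open scoped ENNReal

namespace MeasureTheory

variable {α : Type*} [MeasurableSpace α]

lemma integrable_iff_integrableOn_compl_singleton [MeasurableSingletonClass α] {μ : Measure α}
    [IsFiniteMeasure μ] {f : α → ℝ} (a : α) : Integrable f μ ↔ IntegrableOn f {a}ᶜ μ := by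
  rw [← integrableOn_univ, ← union_compl_self {a}, integrableOn_union,
    and_iff_right integrableOn_singleton]

lemma Measure.withDensity_mono_measure {μ μ' : Measure α} (h : μ ≤ μ') (f : α → ℝ≥0∞) :
    μ.withDensity f ≤ μ'.withDensity f :=
  Measure.le_iff.2 fun s hs ↦ by
    simpa only [withDensity_apply _ hs] using
      lintegral_mono' (Measure.restrict_mono le_rfl h) le_rfl

variable {ν ρ ρ' : Measure α}

lemma Measure.rnDeriv_le_of_le_withDensity [SigmaFinite ρ] {g : α → ℝ≥0∞}
    (h : ν ≤ ρ.withDensity g) : ν.rnDeriv ρ ≤ᵐ[ρ] g :=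
  ae_le_of_forall_setLIntegral_le_of_sigmaFinite (Measure.measurable_rnDeriv ν ρ) fun s hs _ ↦
    calc ∫⁻ x in s, ν.rnDeriv ρ x ∂ρ ≤ ν s := Measure.setLIntegral_rnDeriv_le s
      _ ≤ ρ.withDensity g s := Measure.le_iff'.1 h s
      _ = ∫⁻ x in s, g x ∂ρ := withDensity_apply _ hs

lemma Measure.rnDeriv_ae_eq_of_restrict_eq [SigmaFinite ν] [SigmaFinite ρ] [SigmaFinite ρ']
    {s : Set α} (hs : MeasurableSet s) (hρ : ρ.restrict s = ρ'.restrict s)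
    (hac : ν ≪ ρ) (hac' : ν ≪ ρ') : ∀ᵐ x ∂ν, x ∈ s → ν.rnDeriv ρ x = ν.rnDeriv ρ' x := by
  have restrict_eq_withDensity : ∀ ρ : Measure α, [SigmaFinite ρ] → ν ≪ ρ →
      ν.restrict s = (ρ.restrict s).withDensity (ν.rnDeriv ρ) := fun ρ _ hac ↦ by
    rw [← restrict_withDensity hs, Measure.withDensity_rnDeriv_eq _ _ hac]
  have hdens : ν.restrict s = (ρ'.restrict s).withDensity (ν.rnDeriv ρ) :=
    hρ ▸ restrict_eq_withDensity ρ hac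
  have hdens' := restrict_eq_withDensity ρ' hac'
  have heq : ν.rnDeriv ρ =ᵐ[ρ'.restrict s] ν.rnDeriv ρ' := by
    have h := Measure.rnDeriv_withDensity (ρ'.restrict s) (Measure.measurable_rnDeriv ν ρ)
    have h' := Measure.rnDeriv_withDensity (ρ'.restrict s) (Measure.measurable_rnDeriv ν ρ')
    rw [← hdens] at h
    rw [← hdens'] at h'
    exact h.symm.trans h'
  exact (ae_restrict_iff' hs).1 (hac'.restrict s heq)

end MeasureTheory

lemma KLdiv_le_KLdiv_of_rnDeriv_le {ν ρ ρ' : Measure ℝ} [IsFiniteMeasure ν] [SigmaFinite ρ]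
    [SigmaFinite ρ'] (a : ℝ) (hac : ν ≪ ρ) (hac' : ν ≪ ρ')
    (hle : ν.rnDeriv ρ' ≤ᵐ[ν] ν.rnDeriv ρ)
    (heq : ∀ᵐ x ∂ν, x ≠ a → ν.rnDeriv ρ' x = ν.rnDeriv ρ x) :
    KLdiv ν ρ' ≤ KLdiv ν ρ := by
  set φ : ℝ → ℝ := fun x ↦ Real.log (ν.rnDeriv ρ' x).toReal
  set ψ : ℝ → ℝ := fun x ↦ Real.log (ν.rnDeriv ρ x).toReal
  have hφψ : φ ≤ᵐ[ν] ψ := by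
    filter_upwards [hle, Measure.rnDeriv_pos hac', hac.ae_le (Measure.rnDeriv_ne_top ν ρ)]
      with x hle hpos hfin
    exact Real.log_le_log (ENNReal.toReal_pos hpos.ne' (ne_top_of_le_ne_top hfin hle))
      (ENNReal.toReal_mono hfin hle)
  -- `KLdiv` is a Bochner integral, which is `0` for non-integrable integrands, so monotonicity
  -- needs both log-densities to be integrable together; they differ only at the point `a`.
  have hint : Integrable φ ν ↔ Integrable ψ ν := by
    have hφψ_off : φ =ᵐ[ν.restrict {a}ᶜ] ψ := by
      refine (ae_restrict_iff' (measurableSet_singleton a).compl).2 ?_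
      filter_upwards [heq] with x hx hxa
      simp only [φ, ψ, hx hxa]
    rw [integrable_iff_integrableOn_compl_singleton a,
      integrable_iff_integrableOn_compl_singleton a]
    exact integrable_congr hφψ_off
  rw [KLdiv, KLdiv, if_pos hac, if_pos hac', EReal.coe_le_coe_iff]
  by_cases hψ : Integrable ψ ν
  · exact integral_mono_ae (hint.2 hψ) hψ hφψ
  · exact (integral_undef (mt hint.1 hψ)).trans_le (integral_undef hψ).ge

section MapMax

variable (m : ℝ) {ρ : Measure ℝ}

lemma map_max_restrict_Ioi : (ρ.map (max · m)).restrict (Ioi m) = ρ.restrict (Ioi m) := by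
  have hpre : (max · m) ⁻¹' Ioi m = Ioi m := by ext x; simp
  rw [Measure.restrict_map (by fun_prop) measurableSet_Ioi, hpre]
  have hid : (max · m) =ᵐ[ρ.restrict (Ioi m)] id := by
    filter_upwards [ae_restrict_mem measurableSet_Ioi] with x hx
    exact max_eq_left hx.le
  rw [Measure.map_congr hid, Measure.map_id]

lemma restrict_Ici_le_map_max : ρ.restrict (Ici m) ≤ ρ.map (max · m) := by
  refine Measure.le_iff.2 fun s hs ↦ ?_
  rw [Measure.restrict_apply hs, Measure.map_apply (by fun_prop) hs]
  refine measure_mono fun x hx ↦ ?_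
  simpa [max_eq_left (mem_Ici.1 hx.2)] using hx.1

lemma integral_le_integral_map_max [IsFiniteMeasure ρ] (hρ : Integrable (fun x : ℝ ↦ x) ρ) :
    ∫ x, x ∂ρ ≤ ∫ x, x ∂(ρ.map (max · m)) := by
  rw [integral_map (by fun_prop) (by fun_prop)]
  exact integral_mono hρ (hρ.sup (integrable_const m)) fun x ↦ le_max_left x m

variable {ν : Measure ℝ}

lemma le_withDensity_map_max_rnDeriv [SigmaFinite ν] [SigmaFinite ρ] (hν : ν (Iio m) = 0)
    (hac : ν ≪ ρ) : ν ≤ (ρ.map (max · m)).withDensity (ν.rnDeriv ρ) := by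
  have hν_Ici : ν.restrict (Ici m) = ν := by
    refine Measure.restrict_eq_self_of_ae_mem (measure_mono_null (fun x hx ↦ ?_) hν)
    simpa using hx
  calc ν = (ρ.restrict (Ici m)).withDensity (ν.rnDeriv ρ) := by
        rw [← restrict_withDensity measurableSet_Ici, Measure.withDensity_rnDeriv_eq _ _ hac,
          hν_Ici]
    _ ≤ (ρ.map (max · m)).withDensity (ν.rnDeriv ρ) :=
        Measure.withDensity_mono_measure (restrict_Ici_le_map_max m) _

lemma KLdiv_map_max_le [IsFiniteMeasure ν] [IsFiniteMeasure ρ] (hν : ν (Iio m) = 0) :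
    KLdiv ν (ρ.map (max · m)) ≤ KLdiv ν ρ := by
  by_cases hac : ν ≪ ρ
  swap
  · simp [KLdiv, hac]
  have hle := le_withDensity_map_max_rnDeriv m hν hac
  have hac' : ν ≪ ρ.map (max · m) :=
    (Measure.absolutelyContinuous_of_le hle).trans (withDensity_absolutelyContinuous _ _)
  refine KLdiv_le_KLdiv_of_rnDeriv_le m hac hac' (hac'.ae_le
    (Measure.rnDeriv_le_of_le_withDensity hle)) ?_
  have hm_le : ∀ᵐ x ∂ν, m ≤ x := measure_mono_null (fun x hx ↦ by simpa using hx) hν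
  filter_upwards [hm_le, Measure.rnDeriv_ae_eq_of_restrict_eq measurableSet_Ioi
    (map_max_restrict_Ioi m) hac' hac] with x hmx heq hxm
  exact heq (hmx.lt_of_ne' hxm)

end MapMax

section Models

variable {m M : ℝ} {ρ : Measure ℝ}

lemma DmM_subset_DinfM : DmM m M ⊆ DinfM M := by
  rintro ρ ⟨hprob, hsupp⟩
  have hIcc : ∀ᵐ x ∂ρ, x ∈ Icc m M := measure_mono_null (fun x hx ↦ hx) hsupp
  refine ⟨hprob, measure_mono_null (compl_subset_compl.2 Icc_subset_Iic_self) hsupp, ?_⟩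
  refine Integrable.of_bound aestronglyMeasurable_id (max |m| |M|) ?_
  filter_upwards [hIcc] with x hx
  exact abs_le_max_abs_abs hx.1 hx.2

lemma map_max_mem_DmM (hmM : m ≤ M) (hρ : ρ ∈ DinfM M) : ρ.map (max · m) ∈ DmM m M := by
  obtain ⟨hprob, hsupp, -⟩ := hρ
  refine ⟨Measure.isProbabilityMeasure_map (by fun_prop), ?_⟩
  rw [Measure.map_apply (by fun_prop) measurableSet_Icc.compl]
  refine measure_mono_null (fun x hx ↦ ?_) hsupp
  simp only [mem_preimage, mem_compl_iff, mem_Icc, le_max_right, true_and, max_le_iff,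
    hmM, and_true, mem_Iic] at hx ⊢
  exact hx

end Models

theorem Kinf_bounded_eq_semiBounded_general (m M μ : ℝ) (hmM : m ≤ M)
    (ν : Measure ℝ) (hν : ν ∈ DmM m M) :
    sInf {d : EReal | ∃ ν' ∈ DmM m M, μ < (∫ x, x ∂ν') ∧ d = KLdiv ν ν'} =
      sInf {d : EReal | ∃ ν' ∈ DinfM M, μ < (∫ x, x ∂ν') ∧ d = KLdiv ν ν'} := by
  obtain ⟨hνprob, hνsupp⟩ := hν
  have hν_Iio : ν (Iio m) = 0 :=
    measure_mono_null (fun x hx ↦ by simp [mem_Iio.1 hx]) hνsupp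
  refine le_antisymm (le_sInf ?_) (sInf_le_sInf fun _ ↦ ?_)
  · rintro _ ⟨ρ, hρ, hμρ, rfl⟩
    have := hρ.1
    exact sInf_le_of_le ⟨ρ.map (max · m), map_max_mem_DmM hmM hρ,
      hμρ.trans_le (integral_le_integral_map_max m hρ.2.2), rfl⟩ (KLdiv_map_max_le m hν_Iio)
  · rintro ⟨ρ, hρ, hμρ, rfl⟩
    exact ⟨ρ, DmM_subset_DinfM hρ, hμρ, rfl⟩

theorem Kinf_bounded_eq_semiBounded (m M μ : ℝ) (hmM : m ≤ M)
    (ν : Measure ℝ) (hν : ν ∈ DmM m M) (hμ : (∫ x, x ∂ν) < μ) :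
    sInf {d : EReal | ∃ ν' ∈ DmM m M, μ < (∫ x, x ∂ν') ∧ d = KLdiv ν ν'} =
      sInf {d : EReal | ∃ ν' ∈ DinfM M, μ < (∫ x, x ∂ν') ∧ d = KLdiv ν ν'} :=
  Kinf_bounded_eq_semiBounded_general m M μ hmM ν hν
end

section
/- Let K ≥ 1, M ∈ ℝ, y ∈ (-∞, M], p ∈ (0,1], and η ∈ (0,∞). Define the estimated payoff ŷ = (y - M)/p + M and the mixability gap δ = -(p·ŷ + (1-p)·M) + η^{-1} ln((1-p)·e^{ηM} + p·e^{ηŷ}). Then δ ≤ η·(M - y)²/(2p). -/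
/-!
Writing `x = η (M - y) / p ≥ 0`, the estimate satisfies `η ŷ = η M - x` and `p ŷ + (1 - p) M = y`,
so `η δ = η (M - y) + log ((1 - p) + p e^{-x})`. Bounding `log u ≤ u - 1` and
`e^{-x} ≤ 1 - x + x² / 2` gives `log ((1 - p) + p e^{-x}) ≤ p (-x + x² / 2)`, and the linear
terms cancel, leaving `η δ ≤ p x² / 2 = η² (M - y)² / (2 p)`.
-/

open Real

-- `(1 - t + t² / 2) eᵗ` has derivative `t² eᵗ / 2 ≥ 0`, so it is at least its value `1` at `0`.
lemma exp_neg_le_one_sub_add_sq_div_two {x : ℝ} (hx : 0 ≤ x) :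
    exp (-x) ≤ 1 - x + x ^ 2 / 2 := by
  have hderiv : ∀ t : ℝ, HasDerivAt (fun t => (1 - t + t ^ 2 / 2) * exp t)
      (t ^ 2 / 2 * exp t) t := fun t => by
    have hpoly : HasDerivAt (fun t : ℝ => 1 - t + t ^ 2 / 2) (-1 + t) t := by
      refine (((hasDerivAt_id t).const_sub 1).add
        (((hasDerivAt_id t).pow 2).div_const 2)).congr_deriv ?_
      simp
    exact (hpoly.mul (hasDerivAt_exp t)).congr_deriv (by ring)
  have hmono := monotone_of_hasDerivAt_nonneg hderiv fun t => by positivity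
  have h1 : 1 ≤ (1 - x + x ^ 2 / 2) * exp x := by simpa using hmono hx
  rw [exp_neg, inv_le_iff_one_le_mul₀ (exp_pos x)]
  linarith

lemma one_sub_add_mul_exp_pos {p : ℝ} (hp0 : 0 ≤ p) (hp1 : p ≤ 1) (z : ℝ) :
    0 < (1 - p) + p * exp z := by
  rcases hp0.eq_or_lt with rfl | hp
  · norm_num
  · nlinarith [exp_pos z]

lemma log_one_sub_add_mul_exp_neg_le {p x : ℝ} (hp0 : 0 ≤ p) (hp1 : p ≤ 1) (hx : 0 ≤ x) :
    log ((1 - p) + p * exp (-x)) ≤ p * (-x + x ^ 2 / 2) :=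
  calc log ((1 - p) + p * exp (-x))
      ≤ (1 - p) + p * exp (-x) - 1 := log_le_sub_one_of_pos (one_sub_add_mul_exp_pos hp0 hp1 _)
    _ ≤ p * (-x + x ^ 2 / 2) := by
      nlinarith [exp_neg_le_one_sub_add_sq_div_two hx]

lemma log_one_sub_mul_exp_add_mul_exp {p : ℝ} (hp0 : 0 ≤ p) (hp1 : p ≤ 1) (a x : ℝ) :
    log ((1 - p) * exp a + p * exp (a - x)) = a + log ((1 - p) + p * exp (-x)) := by
  have hfactor : (1 - p) * exp a + p * exp (a - x) = exp a * ((1 - p) + p * exp (-x)) := by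
    rw [sub_eq_add_neg a, exp_add]; ring
  rw [hfactor, log_mul (exp_ne_zero a) (one_sub_add_mul_exp_pos hp0 hp1 _).ne', log_exp]

theorem mixability_gap_sq_bound_general (M y p η : ℝ)
    (hy : y ≤ M) (hp : p ∈ Set.Ioc (0:ℝ) 1) (hη : 0 < η) :
    let yhat := ((y - M) / p + M);
    -(p * yhat + (1 - p) * M) +
        η⁻¹ * Real.log ((1 - p) * Real.exp (η * M) + p * Real.exp (η * yhat)) ≤
      η * (M - y) ^ 2 / (2 * p) := by
  intro yhat
  obtain ⟨hp0, hp1⟩ := hp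
  set x := η * (M - y) / p
  have hx0 : 0 ≤ x := div_nonneg (mul_nonneg hη.le (sub_nonneg.2 hy)) hp0.le
  have hmean : p * yhat + (1 - p) * M = y := by
    simp only [yhat]; field_simp; ring
  have hshift : η * yhat = η * M - x := by
    simp only [yhat, x]; field_simp; ring
  rw [hmean, hshift, log_one_sub_mul_exp_add_mul_exp hp0.le hp1, mul_add,
    inv_mul_cancel_left₀ hη.ne']
  calc -y + (M + η⁻¹ * log ((1 - p) + p * exp (-x)))
      ≤ -y + (M + η⁻¹ * (p * (-x + x ^ 2 / 2))) := by
        gcongr; exact log_one_sub_add_mul_exp_neg_le hp0.le hp1 hx0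
    _ = η * (M - y) ^ 2 / (2 * p) := by simp only [x]; field_simp; ring

theorem mixability_gap_sq_bound (K : ℕ) (hK : 1 ≤ K) (M y p η : ℝ)
    (hy : y ≤ M) (hp : p ∈ Set.Ioc (0:ℝ) 1) (hη : 0 < η) :
    let yhat := ((y - M) / p + M);
    -(p * yhat + (1 - p) * M) +
        η⁻¹ * Real.log ((1 - p) * Real.exp (η * M) + p * Real.exp (η * yhat)) ≤
      η * (M - y) ^ 2 / (2 * p) :=
  mixability_gap_sq_bound_general M y p η hy hp hη
end
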